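/- Let D1 and D2 be Gauss diagrams and let D = D1• # D2• be a connected sum. If an FR3 move can be applied to D using one arrow coming from D1 and two arrows coming from D2 (or one arrow from D2 and two arrows from D1), then D1 or D2 is not a minimal crossing diagram; equivalently, if D1 and D2 are both minimal crossing diagrams, then every FR3 move applicable to D involves three arrows all coming from D1 or all coming from D2. -/
import Mathlib


/-!
Combinatorial model of flat virtual knots via Gauss diagrams.

A Gauss diagram with `n` arrows is a counterclockwise-oriented circle with `2n`
marked points partitioned into `n` ordered pairs (arrows).  We encode it as a
cyclic double-occurrence word: a list of endpoints read counterclockwise from an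
arbitrarily chosen starting point (a basepoint), where an endpoint is a pair
`(a, s)` consisting of the label `a : ℕ` of its arrow and a Boolean `s`
recording whether it is the head (`true`) or tail (`false`) of the arrow.
Rotating the list corresponds to moving the basepoint around the circle.
-/

/-- An endpoint of an arrow: `(arrow label, isHead)`. -/
abbrev Endpoint := ℕ × Bool

/-- A (based) Gauss diagram: the cyclic word read counterclockwise from the
basepoint.  The underlying (cyclic) Gauss diagram is the list up to rotation
and relabelling of the arrows. -/
abbrev GDiagram := List Endpoint

/-- The double-occurrence condition: every arrow label that occurs, occurs
exactly once as a head and exactly once as a tail. -/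
def IsGauss (D : GDiagram) : Prop :=
  ∀ a : ℕ,
    (List.count (a, true) D = 0 ∧ List.count (a, false) D = 0) ∨
    (List.count (a, true) D = 1 ∧ List.count (a, false) D = 1)

/-- The crossing number of a Gauss diagram: its number of arrows. -/
def cr (D : GDiagram) : ℕ := D.length / 2

/-- Relabel the arrows of a diagram by `f`. -/
def relabel (f : ℕ → ℕ) (D : GDiagram) : GDiagram := D.map fun e => (f e.1, e.2)

/-- `Rot D D'` : `D'` is a cyclic rotation of `D`, i.e. the same cyclic Gauss
diagram with another choice of basepoint. -/
def Rot (D D' : GDiagram) : Prop := ∃ u v : GDiagram, D = u ++ v ∧ D' = v ++ u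

/-- `Same D D'` : `D` and `D'` present the same abstract cyclic Gauss diagram,
i.e. they agree up to rotation (choice of basepoint) and injective relabelling
of the arrows. -/
def Same (D D' : GDiagram) : Prop :=
  ∃ (f : ℕ → ℕ) (u v : GDiagram),
    Function.Injective f ∧ D = u ++ v ∧ D' = relabel f (v ++ u)

/-- Raw decreasing FR1 move on the word: delete one arrow whose two endpoints
are adjacent on the circle (both directions of the kink). -/
def fr1 (D D' : GDiagram) : Prop :=
  ∃ (a : ℕ) (s : Bool) (u v : GDiagram),
    D = u ++ [(a, s), (a, !s)] ++ v ∧ D' = u ++ v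

/-- Raw decreasing FR2 move deleting the two arrows labelled `a` and `b`:
the two heads occupy adjacent positions and the two tails occupy adjacent
positions (the four oriented variants correspond to the orders of the heads
and of the tails). -/
def fr2with (a b : ℕ) (D D' : GDiagram) : Prop :=
  ∃ (x y z t : ℕ) (u v w : GDiagram),
    a ≠ b ∧ ({x, y} : Set ℕ) = {a, b} ∧ ({z, t} : Set ℕ) = {a, b} ∧
    D = u ++ [(x, true), (y, true)] ++ v ++ [(z, false), (t, false)] ++ w ∧
    D' = u ++ v ++ w

/-- Raw decreasing FR2 move. -/
def fr2 (D D' : GDiagram) : Prop := ∃ a b : ℕ, fr2with a b D D'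

/-- Raw FR3 (triangle) move on the three arrows labelled `a`, `b`, `c`:
the six endpoints of the three arrows form three pairwise-adjacent endpoint
pairs (each pair containing endpoints of two different arrows), and the move
simultaneously slides (swaps) the three adjacent pairs.  The number of arrows
is preserved. -/
def fr3with (a b c : ℕ) (D D' : GDiagram) : Prop :=
  ∃ (e1 e2 e3 e4 e5 e6 : Endpoint) (u v w x : GDiagram),
    a ≠ b ∧ b ≠ c ∧ a ≠ c ∧
    e1.1 ≠ e2.1 ∧ e3.1 ≠ e4.1 ∧ e5.1 ≠ e6.1 ∧
    ({e1, e2, e3, e4, e5, e6} : Multiset Endpoint) =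
      {(a, true), (a, false), (b, true), (b, false), (c, true), (c, false)} ∧
    D = u ++ [e1, e2] ++ v ++ [e3, e4] ++ w ++ [e5, e6] ++ x ∧
    D' = u ++ [e2, e1] ++ v ++ [e4, e3] ++ w ++ [e6, e5] ++ x

/-- Raw FR3 move. -/
def fr3 (D D' : GDiagram) : Prop := ∃ a b c : ℕ, fr3with a b c D D'

/-- A raw move pattern performed anywhere on the cyclic diagram: apply the raw
(linear-word) move `r` after presenting the diagrams by suitable choices of
basepoint and labels. -/
def stepOf (r : GDiagram → GDiagram → Prop) (D D' : GDiagram) : Prop :=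
  ∃ E E' : GDiagram, Same D E ∧ r E E' ∧ Same E' D'

/-- Decreasing FR1 move (deletes one arrow). -/
def FR1Del : GDiagram → GDiagram → Prop := stepOf fr1
/-- Increasing FR1 move (inserts one arrow). -/
def FR1Ins : GDiagram → GDiagram → Prop := stepOf fun X Y => fr1 Y X
/-- Decreasing FR2 move (deletes two arrows). -/
def FR2Del : GDiagram → GDiagram → Prop := stepOf fr2
/-- Increasing FR2 move (inserts two arrows). -/
def FR2Ins : GDiagram → GDiagram → Prop := stepOf fun X Y => fr2 Y X
/-- FR3 move (preserves the number of arrows). -/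
def FR3Move : GDiagram → GDiagram → Prop := stepOf fr3

/-- One flat Reidemeister move between Gauss diagrams (or a re-presentation of
the same cyclic diagram). -/
def Move (D D' : GDiagram) : Prop :=
  IsGauss D ∧ IsGauss D' ∧
    (FR1Del D D' ∨ FR1Ins D D' ∨ FR2Del D D' ∨ FR2Ins D D' ∨
      FR3Move D D' ∨ Same D D')

/-- Flat equivalence of Gauss diagrams: the equivalence relation generated by
the flat Reidemeister moves.  A flat virtual knot is a `FlatEq`-class. -/
def FlatEq : GDiagram → GDiagram → Prop := Relation.EqvGen Move

/-- The crossing number of the flat virtual knot represented by `D`: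
the minimum of `cr E` over all Gauss diagrams `E` flat equivalent to `D`. -/
noncomputable def crKnot (D : GDiagram) : ℕ :=
  sInf {n : ℕ | ∃ E : GDiagram, IsGauss E ∧ FlatEq D E ∧ cr E = n}

/-- `D1` and `D2` use disjoint sets of arrow labels (so that no arrow of
`D1 ++ D2` joins the two arcs). -/
def LabelDisjoint (D1 D2 : GDiagram) : Prop :=
  ∀ (a : ℕ) (s s' : Bool), (a, s) ∈ D1 → (a, s') ∉ D2

/-- Pure relabelling of a (long) Gauss diagram. -/
def Relabel (D D' : GDiagram) : Prop :=
  ∃ f : ℕ → ℕ, Function.Injective f ∧ D' = relabel f D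

/-- One flat Reidemeister move between long Gauss diagrams: the raw moves
performed inside the interval (no rotation is allowed, since a long diagram is
linearly ordered), together with relabelling. -/
def LongMove (D D' : GDiagram) : Prop :=
  IsGauss D ∧ IsGauss D' ∧
    (fr1 D D' ∨ fr1 D' D ∨ fr2 D D' ∨ fr2 D' D ∨ fr3 D D' ∨ Relabel D D')

/-- Long flat equivalence of long Gauss diagrams.  A long flat virtual knot is
a `LongEq`-class. -/
def LongEq : GDiagram → GDiagram → Prop := Relation.EqvGen LongMove

/-- A long Gauss diagram is trivial as a long flat virtual knot if it is
long flat equivalent to the empty long diagram. -/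
def LongTrivial (D : GDiagram) : Prop := LongEq D []


lemma relabel_id (D : GDiagram) : relabel id D = D := by
  simp [relabel]

lemma same_refl (D : GDiagram) : Same D D :=
  ⟨id, [], D, Function.injective_id, by simp, by simp [relabel_id]⟩

lemma reduce {D M : GDiagram} {p : ℕ} {s : Bool} (hG : IsGauss D)
    (hD : D = ((p, !s) : Endpoint) :: (M ++ [((p, s) : Endpoint)])) :
    crKnot D < cr D := by
  have hmem : ((p, s) : Endpoint) ∈ D := by rw [hD]; simp
  have hcnt : List.count ((p, true) : Endpoint) D = 1 ∧
      List.count ((p, false) : Endpoint) D = 1 := by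
    rcases hG p with ⟨hc1, hc2⟩ | h
    · exfalso
      cases s
      · exact (List.count_eq_zero.mp hc2) hmem
      · exact (List.count_eq_zero.mp hc1) hmem
    · exact h
  have hM0 : ∀ t : Bool, List.count ((p, t) : Endpoint) M = 0 := by
    intro t
    have h1 : List.count ((p, t) : Endpoint) D =
        List.count ((p, t) : Endpoint) M
          + (if ((p, !s) : Endpoint) = (p, t) then 1 else 0)
          + (if ((p, s) : Endpoint) = (p, t) then 1 else 0) := by
      rw [hD]
      simp [List.count_cons, List.count_append, List.count_singleton']
      ring
    cases s <;> cases t <;> simp_all <;> omega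
  have hGM : IsGauss M := by
    intro b
    by_cases hbp : b = p
    · subst hbp; exact Or.inl ⟨hM0 true, hM0 false⟩
    · have hkey : ∀ t : Bool, List.count ((b, t) : Endpoint) M =
          List.count ((b, t) : Endpoint) D := by
        intro t
        rw [hD]
        simp [List.count_cons, List.count_append, List.count_singleton',
          Prod.ext_iff, hbp, Ne.symm hbp]
      rcases hG b with ⟨hc1, hc2⟩ | ⟨hc1, hc2⟩
      · exact Or.inl ⟨by rw [hkey]; exact hc1, by rw [hkey]; exact hc2⟩
      · exact Or.inr ⟨by rw [hkey]; exact hc1, by rw [hkey]; exact hc2⟩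
  have hmv : Move D M := by
    refine ⟨hG, hGM, Or.inl ?_⟩
    refine ⟨M ++ [((p, s) : Endpoint), ((p, !s) : Endpoint)], M, ?_, ?_, same_refl M⟩
    · exact ⟨id, [((p, !s) : Endpoint)], M ++ [((p, s) : Endpoint)],
        Function.injective_id, by rw [hD]; simp, by simp [relabel_id]⟩
    · exact ⟨p, s, M, [], by simp, by simp⟩
  have hle : crKnot D ≤ cr M :=
    Nat.sInf_le ⟨M, hGM, Relation.EqvGen.rel D M hmv, rfl⟩
  have hlen : D.length = M.length + 2 := by rw [hD]; simp
  have hlt : cr M < cr D := by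
    unfold cr; rw [hlen]; omega
  omega

lemma last_head {D : GDiagram} {y z : Endpoint} {U V : GDiagram}
    (hU : D = U ++ [y]) (hV : D = z :: V) (hyz : y ≠ z) :
    ∃ M, D = z :: (M ++ [y]) := by
  cases U with
  | nil =>
    rw [hU] at hV
    simp at hV
    exact absurd hV.1 hyz
  | cons u0 U' =>
    have h := hU.symm.trans hV
    simp at h
    exact ⟨U', by rw [hU, h.1]; simp⟩

lemma endgame {D : GDiagram} {p : ℕ} (hG : IsGauss D)
    (H : ∀ σ : Bool, (∃ U, D = U ++ [((p, σ) : Endpoint)]) ∨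
      ∃ V, D = ((p, σ) : Endpoint) :: V) :
    cr D ≠ crKnot D := by
  rcases H true with ⟨U, hU⟩ | ⟨V, hV⟩ <;> rcases H false with ⟨U', hU'⟩ | ⟨V', hV'⟩
  · have h := (List.append_inj' (hU.symm.trans hU') rfl).2
    simp at h
  · obtain ⟨M, hM⟩ := last_head hU hV' (by simp)
    have := reduce (s := true) hG (by simpa using hM)
    omega
  · obtain ⟨M, hM⟩ := last_head hU' hV (by simp)
    have := reduce (s := false) hG (by simpa using hM)
    omega
  · have h := hV.symm.trans hV'
    simp at h
lemma split (A : GDiagram) {B : GDiagram} {e e' : Endpoint}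
    (h : [e, e'] <:+: A ++ B) :
    [e, e'] <:+: A ∨ [e, e'] <:+: B ∨ ((∃ U, A = U ++ [e]) ∧ ∃ V, B = e' :: V) := by
  induction A with
  | nil => exact Or.inr (Or.inl (by simpa using h))
  | cons x A ih =>
    obtain ⟨s, t, hst⟩ := h
    cases s with
    | nil =>
      simp at hst
      obtain ⟨hx, hrest⟩ := hst
      cases A with
      | nil =>
        right; right
        refine ⟨⟨[], by simp [hx]⟩, ⟨t, ?_⟩⟩
        simpa using hrest.symm
      | cons y A' =>
        left
        simp at hrest
        exact ⟨[], A', by simp [hx, hrest.1]⟩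
    | cons z s' =>
      simp at hst
      have h2 : [e, e'] <:+: A ++ B := ⟨s', t, by simpa using hst.2⟩
      rcases ih h2 with ⟨s2, t2, h3⟩ | hB | ⟨⟨U, hU⟩, hV⟩
      · exact Or.inl ⟨x :: s2, t2, by simp [h3]⟩
      · exact Or.inr (Or.inl hB)
      · exact Or.inr (Or.inr ⟨⟨x :: U, by simp [hU]⟩, hV⟩)

lemma lastOfAppend {A B U : GDiagram} {e : Endpoint}
    (h : A ++ B = U ++ [e]) (hB : B ≠ []) : ∃ U', B = U' ++ [e] := by
  rcases List.append_eq_append_iff.mp h with ⟨a', _, ha2⟩ | ⟨c', _, hc2⟩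
  · exact ⟨a', ha2⟩
  · cases c' with
    | nil => exact ⟨[], by simpa using hc2.symm⟩
    | cons d c'' =>
      exfalso
      have := congrArg List.length hc2
      simp at this
      exact hB this.2
lemma headOfAppend {A B V : GDiagram} {e' : Endpoint}
    (h : A ++ B = e' :: V) (hA : A ≠ []) : ∃ V', A = e' :: V' := by
  cases A with
  | nil => exact absurd rfl hA
  | cons a0 A' =>
    simp at h
    exact ⟨A', by rw [h.1]⟩

lemma junction {A B : GDiagram} (hdisj : LabelDisjoint A B)
    {π κ : ℕ} {sπ sκ : Bool} (hπ : (π, sπ) ∈ A) (hκ : (κ, sκ) ∈ B)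
    {e e' : Endpoint} (h : [e, e'] <:+: (A ++ B) ++ (A ++ B)) :
    (e.1 = π → e'.1 = κ → (∃ U, A = U ++ [e]) ∧ (∃ V, B = e' :: V)) ∧
    (e.1 = κ → e'.1 = π → (∃ U, B = U ++ [e]) ∧ (∃ V, A = e' :: V)) := by
  have hAκ : ∀ z : Endpoint, z ∈ A → z.1 = κ → False := by
    intro z hz hzk
    have hz' : (z.1, z.2) ∈ A := by simpa using hz
    rw [hzk] at hz'
    exact hdisj κ z.2 sκ hz' hκ
  have hBπ : ∀ z : Endpoint, z ∈ B → z.1 = π → False := by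
    intro z hz hzp
    have hz' : (z.1, z.2) ∈ B := by simpa using hz
    rw [hzp] at hz'
    exact hdisj π sπ z.2 hπ hz'
  have hinner : [e, e'] <:+: A ++ B →
      (e.1 = π → e'.1 = κ → (∃ U, A = U ++ [e]) ∧ (∃ V, B = e' :: V)) ∧
      (e.1 = κ → e'.1 = π → (∃ U, B = U ++ [e]) ∧ (∃ V, A = e' :: V)) := by
    intro h2
    rcases split A h2 with hA | hB | ⟨⟨U, hU⟩, ⟨V, hV⟩⟩
    · exact ⟨fun _ he'k => (hAκ e' (hA.subset (by simp)) he'k).elim,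
        fun hek _ => (hAκ e (hA.subset (by simp)) hek).elim⟩
    · exact ⟨fun hep _ => (hBπ e (hB.subset (by simp)) hep).elim,
        fun _ he'p => (hBπ e' (hB.subset (by simp)) he'p).elim⟩
    · exact ⟨fun _ _ => ⟨⟨U, hU⟩, ⟨V, hV⟩⟩,
        fun hek _ => (hAκ e (by simp [hU]) hek).elim⟩
  rcases split (A ++ B) h with hc | hc | ⟨⟨U, hU⟩, ⟨V, hV⟩⟩
  · exact hinner hc
  · exact hinner hc
  · obtain ⟨U', hBU⟩ := lastOfAppend hU (List.ne_nil_of_mem hκ)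
    obtain ⟨V', hAV⟩ := headOfAppend hV (List.ne_nil_of_mem hπ)
    exact ⟨fun hep _ => (hBπ e (by simp [hBU]) hep).elim,
      fun _ _ => ⟨⟨U', hBU⟩, ⟨V', hAV⟩⟩⟩
lemma main1 {D1 D2 : GDiagram} (h1 : IsGauss D1) (hdisj : LabelDisjoint D1 D2)
    (a b c p : ℕ) (e1 e2 e3 e4 e5 e6 : Endpoint) (u v w x E : GDiagram)
    (h12 : e1.1 ≠ e2.1) (h34 : e3.1 ≠ e4.1) (h56 : e5.1 ≠ e6.1)
    (hmul : ({e1, e2, e3, e4, e5, e6} : Multiset Endpoint) =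
      {(a, true), (a, false), (b, true), (b, false), (c, true), (c, false)})
    (hE : E = u ++ [e1, e2] ++ v ++ [e3, e4] ++ w ++ [e5, e6] ++ x)
    (hinf : E <:+: (D1 ++ D2) ++ (D1 ++ D2))
    (hpmem : p = a ∨ p = b ∨ p = c)
    (hp : ∃ s, (p, s) ∈ D1)
    (hothers : ∀ l, (l = a ∨ l = b ∨ l = c) → l ≠ p → ∃ s, (l, s) ∈ D2) :
    cr D1 ≠ crKnot D1 := by
  obtain ⟨sp, hsp⟩ := hp
  have hlab : ∀ z : Endpoint, z ∈ ({e1, e2, e3, e4, e5, e6} : Multiset Endpoint) →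
      z.1 = a ∨ z.1 = b ∨ z.1 = c := by
    intro z hz
    rw [hmul] at hz
    simp only [Multiset.insert_eq_cons, Multiset.mem_cons, Multiset.mem_singleton] at hz
    rcases hz with rfl | rfl | rfl | rfl | rfl | rfl <;> simp
  have hi12 : [e1, e2] <:+: (D1 ++ D2) ++ (D1 ++ D2) :=
    List.IsInfix.trans (show [e1, e2] <:+: E from
      ⟨u, v ++ [e3, e4] ++ w ++ [e5, e6] ++ x, by rw [hE]; simp⟩) hinf
  have hi34 : [e3, e4] <:+: (D1 ++ D2) ++ (D1 ++ D2) :=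
    List.IsInfix.trans (show [e3, e4] <:+: E from
      ⟨u ++ [e1, e2] ++ v, w ++ [e5, e6] ++ x, by rw [hE]; simp⟩) hinf
  have hi56 : [e5, e6] <:+: (D1 ++ D2) ++ (D1 ++ D2) :=
    List.IsInfix.trans (show [e5, e6] <:+: E from
      ⟨u ++ [e1, e2] ++ v ++ [e3, e4] ++ w, x, by rw [hE]⟩) hinf
  have H : ∀ σ : Bool, (∃ U, D1 = U ++ [((p, σ) : Endpoint)]) ∨
      ∃ V, D1 = ((p, σ) : Endpoint) :: V := by
    intro σ
    have hpin : ((p, σ) : Endpoint) ∈ ({e1, e2, e3, e4, e5, e6} : Multiset Endpoint) := by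
      rw [hmul]
      rcases hpmem with rfl | rfl | rfl <;> cases σ <;> simp
    simp only [Multiset.insert_eq_cons, Multiset.mem_cons, Multiset.mem_singleton] at hpin
    rcases hpin with h | h | h | h | h | h
    · have hep : e1.1 = p := by rw [← h]
      obtain ⟨s2, hs2⟩ := hothers e2.1 (hlab e2 (by simp)) (fun hq => h12 (hep.trans hq.symm))
      obtain ⟨⟨U, hU⟩, -⟩ := (junction hdisj hsp hs2 hi12).1 hep rfl
      exact Or.inl ⟨U, by rw [hU, ← h]⟩
    · have hep : e2.1 = p := by rw [← h]
      obtain ⟨s1, hs1⟩ := hothers e1.1 (hlab e1 (by simp)) (fun hq => h12 (hq.trans hep.symm))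
      obtain ⟨-, ⟨V, hV⟩⟩ := (junction hdisj hsp hs1 hi12).2 rfl hep
      exact Or.inr ⟨V, by rw [hV, ← h]⟩
    · have hep : e3.1 = p := by rw [← h]
      obtain ⟨s2, hs2⟩ := hothers e4.1 (hlab e4 (by simp)) (fun hq => h34 (hep.trans hq.symm))
      obtain ⟨⟨U, hU⟩, -⟩ := (junction hdisj hsp hs2 hi34).1 hep rfl
      exact Or.inl ⟨U, by rw [hU, ← h]⟩
    · have hep : e4.1 = p := by rw [← h]
      obtain ⟨s1, hs1⟩ := hothers e3.1 (hlab e3 (by simp)) (fun hq => h34 (hq.trans hep.symm))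
      obtain ⟨-, ⟨V, hV⟩⟩ := (junction hdisj hsp hs1 hi34).2 rfl hep
      exact Or.inr ⟨V, by rw [hV, ← h]⟩
    · have hep : e5.1 = p := by rw [← h]
      obtain ⟨s2, hs2⟩ := hothers e6.1 (hlab e6 (by simp)) (fun hq => h56 (hep.trans hq.symm))
      obtain ⟨⟨U, hU⟩, -⟩ := (junction hdisj hsp hs2 hi56).1 hep rfl
      exact Or.inl ⟨U, by rw [hU, ← h]⟩
    · have hep : e6.1 = p := by rw [← h]
      obtain ⟨s1, hs1⟩ := hothers e5.1 (hlab e5 (by simp)) (fun hq => h56 (hq.trans hep.symm))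
      obtain ⟨-, ⟨V, hV⟩⟩ := (junction hdisj hsp hs1 hi56).2 rfl hep
      exact Or.inr ⟨V, by rw [hV, ← h]⟩
  exact endgame h1 H

lemma main2 {D1 D2 : GDiagram} (h2 : IsGauss D2) (hdisj : LabelDisjoint D1 D2)
    (a b c p : ℕ) (e1 e2 e3 e4 e5 e6 : Endpoint) (u v w x E : GDiagram)
    (h12 : e1.1 ≠ e2.1) (h34 : e3.1 ≠ e4.1) (h56 : e5.1 ≠ e6.1)
    (hmul : ({e1, e2, e3, e4, e5, e6} : Multiset Endpoint) =
      {(a, true), (a, false), (b, true), (b, false), (c, true), (c, false)})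
    (hE : E = u ++ [e1, e2] ++ v ++ [e3, e4] ++ w ++ [e5, e6] ++ x)
    (hinf : E <:+: (D1 ++ D2) ++ (D1 ++ D2))
    (hpmem : p = a ∨ p = b ∨ p = c)
    (hp : ∃ s, (p, s) ∈ D2)
    (hothers : ∀ l, (l = a ∨ l = b ∨ l = c) → l ≠ p → ∃ s, (l, s) ∈ D1) :
    cr D2 ≠ crKnot D2 := by
  obtain ⟨sp, hsp⟩ := hp
  have hlab : ∀ z : Endpoint, z ∈ ({e1, e2, e3, e4, e5, e6} : Multiset Endpoint) →
      z.1 = a ∨ z.1 = b ∨ z.1 = c := by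
    intro z hz
    rw [hmul] at hz
    simp only [Multiset.insert_eq_cons, Multiset.mem_cons, Multiset.mem_singleton] at hz
    rcases hz with rfl | rfl | rfl | rfl | rfl | rfl <;> simp
  have hi12 : [e1, e2] <:+: (D1 ++ D2) ++ (D1 ++ D2) :=
    List.IsInfix.trans (show [e1, e2] <:+: E from
      ⟨u, v ++ [e3, e4] ++ w ++ [e5, e6] ++ x, by rw [hE]; simp⟩) hinf
  have hi34 : [e3, e4] <:+: (D1 ++ D2) ++ (D1 ++ D2) :=
    List.IsInfix.trans (show [e3, e4] <:+: E from
      ⟨u ++ [e1, e2] ++ v, w ++ [e5, e6] ++ x, by rw [hE]; simp⟩) hinf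
  have hi56 : [e5, e6] <:+: (D1 ++ D2) ++ (D1 ++ D2) :=
    List.IsInfix.trans (show [e5, e6] <:+: E from
      ⟨u ++ [e1, e2] ++ v ++ [e3, e4] ++ w, x, by rw [hE]⟩) hinf
  have H : ∀ σ : Bool, (∃ U, D2 = U ++ [((p, σ) : Endpoint)]) ∨
      ∃ V, D2 = ((p, σ) : Endpoint) :: V := by
    intro σ
    have hpin : ((p, σ) : Endpoint) ∈ ({e1, e2, e3, e4, e5, e6} : Multiset Endpoint) := by
      rw [hmul]
      rcases hpmem with rfl | rfl | rfl <;> cases σ <;> simp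
    simp only [Multiset.insert_eq_cons, Multiset.mem_cons, Multiset.mem_singleton] at hpin
    rcases hpin with h | h | h | h | h | h
    · have hep : e1.1 = p := by rw [← h]
      obtain ⟨s2, hs2⟩ := hothers e2.1 (hlab e2 (by simp)) (fun hq => h12 (hep.trans hq.symm))
      obtain ⟨⟨U, hU⟩, -⟩ := (junction hdisj hs2 hsp hi12).2 hep rfl
      exact Or.inl ⟨U, by rw [hU, ← h]⟩
    · have hep : e2.1 = p := by rw [← h]
      obtain ⟨s1, hs1⟩ := hothers e1.1 (hlab e1 (by simp)) (fun hq => h12 (hq.trans hep.symm))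
      obtain ⟨-, ⟨V, hV⟩⟩ := (junction hdisj hs1 hsp hi12).1 rfl hep
      exact Or.inr ⟨V, by rw [hV, ← h]⟩
    · have hep : e3.1 = p := by rw [← h]
      obtain ⟨s2, hs2⟩ := hothers e4.1 (hlab e4 (by simp)) (fun hq => h34 (hep.trans hq.symm))
      obtain ⟨⟨U, hU⟩, -⟩ := (junction hdisj hs2 hsp hi34).2 hep rfl
      exact Or.inl ⟨U, by rw [hU, ← h]⟩
    · have hep : e4.1 = p := by rw [← h]
      obtain ⟨s1, hs1⟩ := hothers e3.1 (hlab e3 (by simp)) (fun hq => h34 (hq.trans hep.symm))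
      obtain ⟨-, ⟨V, hV⟩⟩ := (junction hdisj hs1 hsp hi34).1 rfl hep
      exact Or.inr ⟨V, by rw [hV, ← h]⟩
    · have hep : e5.1 = p := by rw [← h]
      obtain ⟨s2, hs2⟩ := hothers e6.1 (hlab e6 (by simp)) (fun hq => h56 (hep.trans hq.symm))
      obtain ⟨⟨U, hU⟩, -⟩ := (junction hdisj hs2 hsp hi56).2 hep rfl
      exact Or.inl ⟨U, by rw [hU, ← h]⟩
    · have hep : e6.1 = p := by rw [← h]
      obtain ⟨s1, hs1⟩ := hothers e5.1 (hlab e5 (by simp)) (fun hq => h56 (hq.trans hep.symm))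
      obtain ⟨-, ⟨V, hV⟩⟩ := (junction hdisj hs1 hsp hi56).1 rfl hep
      exact Or.inr ⟨V, by rw [hV, ← h]⟩
  exact endgame h2 H
/-- Let `D = D1 ++ D2` be a connected sum.  If an FR3 move
can be applied to `D` (i.e. to some rotation of it) whose three arrows do not
all come from `D1` and do not all come from `D2` — equivalently, one arrow
comes from one summand and two from the other — then `D1` or `D2` is not a
minimal crossing diagram. -/
theorem split_FR3_implies_not_minimal
    (D1 D2 : GDiagram) (h1 : IsGauss D1) (h2 : IsGauss D2)
    (hdisj : LabelDisjoint D1 D2)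
    (a b c : ℕ) (E E' : GDiagram)
    (hrot : Rot (D1 ++ D2) E) (hfr3 : fr3with a b c E E')
    (hnot1 : ¬ ((∃ s, (a, s) ∈ D1) ∧ (∃ s, (b, s) ∈ D1) ∧ (∃ s, (c, s) ∈ D1)))
    (hnot2 : ¬ ((∃ s, (a, s) ∈ D2) ∧ (∃ s, (b, s) ∈ D2) ∧ (∃ s, (c, s) ∈ D2))) :
    cr D1 ≠ crKnot D1 ∨ cr D2 ≠ crKnot D2 := by
  obtain ⟨e1, e2, e3, e4, e5, e6, u, v, w, x, hab, hbc, hac, h12, h34, h56, hmul, hE, hE'⟩ := hfr3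
  obtain ⟨pp, qq, hD, hE2⟩ := hrot
  have hinf : E <:+: (D1 ++ D2) ++ (D1 ++ D2) := ⟨pp, qq, by rw [hE2, hD]; simp⟩
  have hmemE : ∀ z : Endpoint, z ∈ E → z ∈ D1 ∨ z ∈ D2 := by
    intro z hz
    rw [hE2] at hz
    have hz2 : z ∈ pp ++ qq := by simp at hz ⊢; tauto
    rw [← hD] at hz2
    simpa using hz2
  have hsix : ∀ z : Endpoint,
      z ∈ ({(a, true), (a, false), (b, true), (b, false), (c, true), (c, false)} :
        Multiset Endpoint) → z ∈ D1 ∨ z ∈ D2 := by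
    intro z hz
    rw [← hmul] at hz
    simp only [Multiset.insert_eq_cons, Multiset.mem_cons, Multiset.mem_singleton] at hz
    apply hmemE
    rcases hz with rfl | rfl | rfl | rfl | rfl | rfl <;> rw [hE] <;> simp
  have hA := hsix (a, true) (by simp)
  have hB := hsix (b, true) (by simp)
  have hC := hsix (c, true) (by simp)
  rcases hA with hA | hA <;> rcases hB with hB | hB <;> rcases hC with hC | hC
  · exact absurd ⟨⟨true, hA⟩, ⟨true, hB⟩, ⟨true, hC⟩⟩ hnot1
  · refine Or.inr (main2 h2 hdisj a b c c e1 e2 e3 e4 e5 e6 u v w x E h12 h34 h56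
      hmul hE hinf (by tauto) ⟨true, hC⟩ ?_)
    intro l hl hlp
    rcases hl with rfl | rfl | rfl
    · exact ⟨true, hA⟩
    · exact ⟨true, hB⟩
    · exact absurd rfl hlp
  · refine Or.inr (main2 h2 hdisj a b c b e1 e2 e3 e4 e5 e6 u v w x E h12 h34 h56
      hmul hE hinf (by tauto) ⟨true, hB⟩ ?_)
    intro l hl hlp
    rcases hl with rfl | rfl | rfl
    · exact ⟨true, hA⟩
    · exact absurd rfl hlp
    · exact ⟨true, hC⟩
  · refine Or.inl (main1 h1 hdisj a b c a e1 e2 e3 e4 e5 e6 u v w x E h12 h34 h56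
      hmul hE hinf (by tauto) ⟨true, hA⟩ ?_)
    intro l hl hlp
    rcases hl with rfl | rfl | rfl
    · exact absurd rfl hlp
    · exact ⟨true, hB⟩
    · exact ⟨true, hC⟩
  · refine Or.inr (main2 h2 hdisj a b c a e1 e2 e3 e4 e5 e6 u v w x E h12 h34 h56
      hmul hE hinf (by tauto) ⟨true, hA⟩ ?_)
    intro l hl hlp
    rcases hl with rfl | rfl | rfl
    · exact absurd rfl hlp
    · exact ⟨true, hB⟩
    · exact ⟨true, hC⟩
  · refine Or.inl (main1 h1 hdisj a b c b e1 e2 e3 e4 e5 e6 u v w x E h12 h34 h56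
      hmul hE hinf (by tauto) ⟨true, hB⟩ ?_)
    intro l hl hlp
    rcases hl with rfl | rfl | rfl
    · exact ⟨true, hA⟩
    · exact absurd rfl hlp
    · exact ⟨true, hC⟩
  · refine Or.inl (main1 h1 hdisj a b c c e1 e2 e3 e4 e5 e6 u v w x E h12 h34 h56
      hmul hE hinf (by tauto) ⟨true, hC⟩ ?_)
    intro l hl hlp
    rcases hl with rfl | rfl | rfl
    · exact ⟨true, hA⟩
    · exact ⟨true, hB⟩
    · exact absurd rfl hlp
  · exact absurd ⟨⟨true, hA⟩, ⟨true, hB⟩, ⟨true, hC⟩⟩ hnot2
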